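/- A contractive B_x–ball space is S₁ (spherically complete) if and only if it is S₂ (the intersection of every nest contains a ball); moreover, in a spherically complete contractive B_x–ball space, every ball B_x contains a singleton ball of the form B_a = {a}. -/

import Mathlib

/-!
Under (C1) every point `z` of an intersection of balls `B_y` carries its ball `B_z` into that
intersection, which gives S₁ ⇒ S₂; S₂ ⇒ S₁ holds because balls are nonempty. In an S₂ space
every chain of balls has a ball as a lower bound, so Zorn's lemma yields a minimal ball inside
each `B_x`; by (C2) a minimal ball is a singleton `{a}`, and then (C1) forces `B_a = {a}`.
-/

namespace BallSpace

variable {X : Type*} (bx : X → Set X)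

/-- Property S₁. -/
def SphericallyComplete : Prop :=
  ∀ N ⊆ Set.range bx, N.Nonempty → IsChain (· ⊆ ·) N → (⋂₀ N).Nonempty

/-- Property S₂. -/
def ChainIntersectionsContainBall : Prop :=
  ∀ N ⊆ Set.range bx, N.Nonempty → IsChain (· ⊆ ·) N → ∃ b ∈ Set.range bx, b ⊆ ⋂₀ N

variable {bx}

theorem ball_subset_sInter_of_mem (hC1 : ∀ x y, y ∈ bx x → bx y ⊆ bx x)
    {N : Set (Set X)} (hN : N ⊆ Set.range bx) {z : X} (hz : z ∈ ⋂₀ N) : bx z ⊆ ⋂₀ N := by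
  refine Set.subset_sInter fun t ht => ?_
  obtain ⟨y, rfl⟩ := hN ht
  exact hC1 y z (hz _ ht)

theorem SphericallyComplete.chainIntersectionsContainBall
    (hC1 : ∀ x y, y ∈ bx x → bx y ⊆ bx x) (hS1 : SphericallyComplete bx) :
    ChainIntersectionsContainBall bx := by
  intro N hN hNne hchain
  obtain ⟨z, hz⟩ := hS1 N hN hNne hchain
  exact ⟨bx z, Set.mem_range_self z, ball_subset_sInter_of_mem hC1 hN hz⟩

theorem ChainIntersectionsContainBall.sphericallyComplete (hne : ∀ x, (bx x).Nonempty)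
    (hS2 : ChainIntersectionsContainBall bx) : SphericallyComplete bx := by
  intro N hN hNne hchain
  obtain ⟨_, ⟨y, rfl⟩, hy⟩ := hS2 N hN hNne hchain
  exact (hne y).mono hy

theorem sphericallyComplete_iff_chainIntersectionsContainBall
    (hne : ∀ x, (bx x).Nonempty) (hC1 : ∀ x y, y ∈ bx x → bx y ⊆ bx x) :
    SphericallyComplete bx ↔ ChainIntersectionsContainBall bx :=
  ⟨fun h => h.chainIntersectionsContainBall hC1, fun h => h.sphericallyComplete hne⟩

theorem ChainIntersectionsContainBall.exists_minimal_ball_subset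
    (hS2 : ChainIntersectionsContainBall bx) (x : X) :
    ∃ y, bx y ⊆ bx x ∧ Minimal (· ∈ Set.range bx) (bx y) := by
  obtain ⟨_, hsub, hmin⟩ := zorn_superset_nonempty (Set.range bx)
    (fun c hc hchain hcne => by
      obtain ⟨b, hb, hbc⟩ := hS2 c hc hcne hchain
      exact ⟨b, hb, fun s hs => hbc.trans (Set.sInter_subset_of_mem hs)⟩)
    (bx x) (Set.mem_range_self x)
  obtain ⟨y, rfl⟩ := hmin.prop
  exact ⟨y, hsub, hmin⟩

theorem exists_eq_singleton_of_minimal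
    (hC2 : ∀ x, (¬ ∃ a, bx x = {a}) → ∃ y ∈ bx x, bx y ⊂ bx x) {y : X}
    (hmin : Minimal (· ∈ Set.range bx) (bx y)) : ∃ a, bx y = {a} := by
  by_contra hsing
  obtain ⟨z, -, hzy⟩ := hC2 y hsing
  exact hzy.not_subset (hmin.le_of_le (Set.mem_range_self z) hzy.subset)

theorem ball_eq_singleton_of_ball_eq_singleton (hne : ∀ x, (bx x).Nonempty)
    (hC1 : ∀ x y, y ∈ bx x → bx y ⊆ bx x) {y a : X} (hy : bx y = {a}) : bx a = {a} :=
  (hne a).subset_singleton_iff.mp (hy ▸ hC1 y a (hy ▸ rfl))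

end BallSpace

open BallSpace in
theorem contractive_S1_iff_S2_general {X : Type*}
    (bx : X → Set X) (hne : ∀ x, (bx x).Nonempty)
    (hC1 : ∀ x y, y ∈ bx x → bx y ⊆ bx x)
    (hC2 : ∀ x, (¬ ∃ a, bx x = {a}) → ∃ y ∈ bx x, bx y ⊂ bx x) :
    ((∀ N ⊆ Set.range bx, N.Nonempty → IsChain (· ⊆ ·) N → (⋂₀ N).Nonempty) ↔
     (∀ N ⊆ Set.range bx, N.Nonempty → IsChain (· ⊆ ·) N → ∃ b ∈ Set.range bx, b ⊆ ⋂₀ N)) ∧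
    ((∀ N ⊆ Set.range bx, N.Nonempty → IsChain (· ⊆ ·) N → (⋂₀ N).Nonempty) →
      ∀ x : X, ∃ a : X, bx a = {a} ∧ bx a ⊆ bx x) := by
  refine ⟨sphericallyComplete_iff_chainIntersectionsContainBall hne hC1, fun hS1 x => ?_⟩
  obtain ⟨y, hyx, hmin⟩ :=
    (SphericallyComplete.chainIntersectionsContainBall hC1 hS1).exists_minimal_ball_subset x
  obtain ⟨a, hy⟩ := exists_eq_singleton_of_minimal hC2 hmin
  have ha : bx a = {a} := ball_eq_singleton_of_ball_eq_singleton hne hC1 hy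
  exact ⟨a, ha, ha ▸ hy ▸ hyx⟩

/-- A contractive B_x–ball space is S₁ iff it is S₂; moreover, if it is spherically
complete, every ball B_x contains a singleton ball B_a = {a}. -/
theorem contractive_S1_iff_S2 {X : Type*} [Nonempty X]
    (bx : X → Set X) (hne : ∀ x, (bx x).Nonempty)
    (hC1 : ∀ x y, y ∈ bx x → bx y ⊆ bx x)
    (hC2 : ∀ x, (¬ ∃ a, bx x = {a}) → ∃ y ∈ bx x, bx y ⊂ bx x) :
    ((∀ N ⊆ Set.range bx, N.Nonempty → IsChain (· ⊆ ·) N → (⋂₀ N).Nonempty) ↔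
     (∀ N ⊆ Set.range bx, N.Nonempty → IsChain (· ⊆ ·) N → ∃ b ∈ Set.range bx, b ⊆ ⋂₀ N)) ∧
    ((∀ N ⊆ Set.range bx, N.Nonempty → IsChain (· ⊆ ·) N → (⋂₀ N).Nonempty) →
      ∀ x : X, ∃ a : X, bx a = {a} ∧ bx a ⊆ bx x) :=
  contractive_S1_iff_S2_general bx hne hC1 hC2
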